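/- arXiv:0903.3922 — 2 statements merged into one kernel-verified Lean document; each statement's English description precedes it below -/
import Mathlib

section
/- Let E and F be Fréchet spaces (complete, metrizable, locally convex topological vector spaces over ℂ), let G and H be Hausdorff topological vector spaces over ℂ, let i_E : E → G and i_F : F → H be injective continuous linear maps, and let T : G → H be a continuous linear map. Assume that for every f ∈ F there exists u ∈ E with T(i_E(u)) = i_F(f). Then for every continuous seminorm p on E there exists a continuous seminorm q on F such that: (i) for every f ∈ F with q(f) > 0 there exists u ∈ E with T(i_E(u)) = i_F(f) and p(u) ≤ q(f); and (ii) for every f ∈ F with q(f) = 0 and every ε > 0 there exists u ∈ E with T(i_E(u)) = i_F(f) and p(u) ≤ ε. -/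
/-!
The solution pairs `(u, f)` form a closed subspace `S` of `E × F`, hence a complete metrizable
space, and the projection `π : S → F` is onto by hypothesis. Banach's open mapping argument
applies to `π`: by Baire category `closure (π '' W)` is a neighbourhood of zero for every
neighbourhood `W`, and completeness of `S` removes the closure by summing a sequence of ever
smaller corrections. Hence the quotient seminorm `f ↦ inf {p u | (u, f) ∈ S}` is continuous, and
twice it is the required `q`.
-/

open Filter Topology Set Pointwise Function Uniformity

theorem exists_sub_mem_of_mem_closure {F : Type*} [AddGroup F] [TopologicalSpace F]
    [IsTopologicalAddGroup F] {S T : Set F} {g : F} (hg : g ∈ closure S) (hT : T ∈ 𝓝 0) :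
    ∃ s ∈ S, g - s ∈ T := by
  have : (g - ·) ⁻¹' T ∈ 𝓝 g := (continuous_const.sub continuous_id).tendsto' g 0 (sub_self g) hT
  obtain ⟨s, hsT, hsS⟩ := mem_closure_iff_nhds.1 hg _ this
  exact ⟨s, hsS, hsT⟩

theorem closure_subset_of_add_subset {V : Type*} [AddGroup V] [TopologicalSpace V]
    [IsTopologicalAddGroup V] {A B : Set V} (hA : A ∈ 𝓝 0) (hAB : A + A ⊆ B) :
    closure A ⊆ B := by
  intro v hv
  obtain ⟨a, ha, hva⟩ := exists_sub_mem_of_mem_closure hv hA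
  simpa only [sub_add_cancel] using hAB (add_mem_add hva ha)

theorem sub_mem_of_succ_sub_mem {V : Type*} [AddGroup V] {u : ℕ → Set V} (hu0 : ∀ n, 0 ∈ u n)
    (hu : ∀ n, u (n + 1) + u (n + 1) ⊆ u n) {x : ℕ → V} (hx : ∀ n, x (n + 1) - x n ∈ u (n + 1))
    (m j : ℕ) : x (m + j) - x m ∈ u m := by
  induction j generalizing m with
  | zero => simpa using hu0 m
  | succ j ih =>
    have h := hu m (add_mem_add (ih (m + 1)) (hx m))
    rwa [sub_add_sub_cancel, add_right_comm] at h

theorem cauchySeq_of_succ_sub_mem {V : Type*} [AddGroup V] [UniformSpace V] [IsUniformAddGroup V]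
    {u : ℕ → Set V} (hu : (𝓝 0).HasAntitoneBasis u) (hu_add : ∀ n, u (n + 1) + u (n + 1) ⊆ u n)
    {x : ℕ → V} (hx : ∀ n, x (n + 1) - x n ∈ u (n + 1)) : CauchySeq x := by
  have hbasis : (𝓤 V).HasBasis (fun _ => True) fun i => {p : V × V | p.1 - p.2 ∈ u i} := by
    rw [uniformity_eq_comap_nhds_zero_swapped]
    exact hu.1.comap _
  have hu0 : ∀ n, (0 : V) ∈ u n := fun n => mem_of_mem_nhds (hu.1.mem_of_mem trivial)
  refine hbasis.cauchySeq_iff'.2 fun i _ => ⟨i, fun n hn => ?_⟩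
  simpa [Nat.add_sub_cancel' hn] using sub_mem_of_succ_sub_mem hu0 hu_add hx i (n - i)

theorem AddMonoidHom.tendsto_zero_of_mem_closure_image {V F : Type*} [AddGroup V]
    [TopologicalSpace V] [AddGroup F] [TopologicalSpace F] [IsTopologicalAddGroup F]
    (π : V →+ F) (hπc : Continuous π) {u : ℕ → Set V} (hu : (𝓝 0).HasAntitoneBasis u)
    {y : ℕ → F} (hy : ∀ n, y n ∈ closure (π '' u n)) : Tendsto y atTop (𝓝 0) := by
  refine (closed_nhds_basis (0 : F)).tendsto_right_iff.2 fun M ⟨hM, hMc⟩ => ?_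
  obtain ⟨k, -, hk⟩ := hu.1.mem_iff.1 (hπc.tendsto' 0 0 (map_zero π) hM)
  filter_upwards [eventually_ge_atTop k] with n hn
  refine closure_minimal ?_ hMc (hy n)
  rintro _ ⟨w, hw, rfl⟩
  exact hk (hu.2 hn hw)

section CompleteGroup

variable {V F : Type*} [AddCommGroup V] [UniformSpace V] [IsUniformAddGroup V] [CompleteSpace V]
  [AddCommGroup F] [TopologicalSpace F] [IsTopologicalAddGroup F] [T2Space F]

theorem AddMonoidHom.closure_image_subset_image_closure (π : V →+ F) (hπc : Continuous π)
    (hπ : ∀ W ∈ 𝓝 (0 : V), closure (π '' W) ∈ 𝓝 0) {u : ℕ → Set V}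
    (hu : (𝓝 0).HasAntitoneBasis u) (hu_add : ∀ n, u (n + 1) + u (n + 1) ⊆ u n) :
    closure (π '' u 1) ⊆ π '' closure (u 0) := by
  intro f hf
  have step : ∀ n x, f - π x ∈ closure (π '' u (n + 1)) →
      ∃ y, f - π y ∈ closure (π '' u (n + 2)) ∧ y - x ∈ u (n + 1) := by
    intro n x hx
    obtain ⟨_, ⟨d, hd, rfl⟩, hfd⟩ :=
      exists_sub_mem_of_mem_closure hx (hπ _ (hu.1.mem_of_mem trivial))
    exact ⟨x + d, by rwa [map_add, ← sub_sub], by simpa using hd⟩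
  choose! g hg using step
  let x : ℕ → V := fun n => Nat.rec 0 g n
  have hx : ∀ n, f - π (x n) ∈ closure (π '' u (n + 1)) := by
    intro n
    induction n with
    | zero => simpa [x] using hf
    | succ n ih => exact (hg n (x n) ih).1
  have hx_succ : ∀ n, x (n + 1) - x n ∈ u (n + 1) := fun n => (hg n (x n) (hx n)).2
  obtain ⟨v, hv⟩ := cauchySeq_tendsto_of_complete (cauchySeq_of_succ_sub_mem hu hu_add hx_succ)
  have hu0 : ∀ n, (0 : V) ∈ u n := fun n => mem_of_mem_nhds (hu.1.mem_of_mem trivial)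
  have hx_mem : ∀ n, x n ∈ u 0 := fun n => by
    simpa [x] using sub_mem_of_succ_sub_mem hu0 hu_add hx_succ 0 n
  have hfx : Tendsto (fun n => f - π (x n)) atTop (𝓝 0) :=
    π.tendsto_zero_of_mem_closure_image hπc hu fun n =>
      closure_mono (image_mono (hu.2 n.le_succ)) (hx n)
  have hfv : Tendsto (fun n => f - π (x n)) atTop (𝓝 (f - π v)) :=
    tendsto_const_nhds.sub ((hπc.tendsto v).comp hv)
  exact ⟨v, mem_closure_of_tendsto hv (Eventually.of_forall hx_mem),
    (sub_eq_zero.1 (tendsto_nhds_unique hfv hfx)).symm⟩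

theorem AddMonoidHom.image_mem_nhds_zero_of_closure_image [FirstCountableTopology V]
    (π : V →+ F) (hπc : Continuous π) (hπ : ∀ W ∈ 𝓝 (0 : V), closure (π '' W) ∈ 𝓝 0)
    {U : Set V} (hU : U ∈ 𝓝 0) : π '' U ∈ 𝓝 0 := by
  obtain ⟨u, hu, hu_add⟩ := IsTopologicalAddGroup.exists_antitone_basis_nhds_zero V
  obtain ⟨k, -, hk⟩ := hu.1.mem_iff.1 hU
  have hw : (𝓝 0).HasAntitoneBasis fun n => u (k + 1 + n) :=
    hu.comp_strictMono (strictMono_id.const_add (k + 1))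
  have hcl : closure (u (k + 1)) ⊆ U :=
    closure_subset_of_add_subset (hu.1.mem_of_mem trivial) ((hu_add k).trans hk)
  exact mem_of_superset (hπ _ (hw.1.mem_of_mem trivial))
    ((π.closure_image_subset_image_closure hπc hπ hw fun n => hu_add _).trans (image_mono hcl))

end CompleteGroup

theorem LinearMap.closure_image_mem_nhds_zero {𝕜 V F : Type*} [NontriviallyNormedField 𝕜]
    [AddCommGroup V] [Module 𝕜 V] [TopologicalSpace V] [IsTopologicalAddGroup V]
    [ContinuousSMul 𝕜 V] [AddCommGroup F] [Module 𝕜 F] [TopologicalSpace F]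
    [IsTopologicalAddGroup F] [ContinuousConstSMul 𝕜 F] [BaireSpace F]
    (π : V →ₗ[𝕜] F) (hπ : Surjective π) {W : Set V} (hW : W ∈ 𝓝 0) :
    closure (π '' W) ∈ 𝓝 0 := by
  obtain ⟨W', hW', hW'W⟩ := exists_nhds_half_neg hW
  set A := closure (π '' W')
  choose c hc using fun n : ℕ => NormedField.exists_lt_norm 𝕜 n
  have hc0 : ∀ n, c n ≠ 0 := fun n => norm_pos_iff.1 ((Nat.cast_nonneg n).trans_lt (hc n))
  have hcover : ⋃ n, c n • A = univ := by
    refine eq_univ_of_forall fun f => ?_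
    obtain ⟨v, rfl⟩ := hπ f
    obtain ⟨r, -, hr⟩ := (absorbent_nhds_zero (𝕜 := 𝕜) hW' v).exists_pos
    obtain ⟨n, hn⟩ := exists_nat_ge r
    obtain ⟨w, hw, rfl⟩ := hr (c n) (hn.trans (hc n).le) (mem_singleton v)
    exact mem_iUnion.2 ⟨n, by
      rw [map_smul]; exact smul_mem_smul_set (subset_closure (mem_image_of_mem π hw))⟩
  obtain ⟨n, hn⟩ := nonempty_interior_of_iUnion_of_closed
    (fun n => isClosed_closure.smul_of_ne_zero (hc0 n)) hcover
  rw [interior_smul₀ (hc0 n), smul_set_nonempty] at hn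
  -- `z = y - (y - z)` lies in `A - A` for `z` near `0`, where `y` is an interior point of `A`.
  obtain ⟨y, hy⟩ := hn
  have hsub : π '' W' - π '' W' ⊆ π '' W := by
    rintro _ ⟨_, ⟨a, ha, rfl⟩, _, ⟨b, hb, rfl⟩, rfl⟩
    exact ⟨a - b, hW'W a ha b hb, map_sub π a b⟩
  have : (y - ·) ⁻¹' A ∈ 𝓝 0 := (continuous_const.sub continuous_id).tendsto' 0 y (sub_zero y)
    (mem_interior_iff_mem_nhds.1 hy)
  refine mem_of_superset this fun z hz => ?_
  simpa using map_mem_closure₂ continuous_sub (interior_subset hy) hz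
    fun a ha b hb => hsub (sub_mem_sub ha hb)

theorem ContinuousLinearMap.image_mem_nhds_zero_of_surjective {𝕜 V F : Type*}
    [NontriviallyNormedField 𝕜] [AddCommGroup V] [Module 𝕜 V] [UniformSpace V]
    [IsUniformAddGroup V] [ContinuousSMul 𝕜 V] [CompleteSpace V] [FirstCountableTopology V]
    [AddCommGroup F] [Module 𝕜 F] [TopologicalSpace F] [IsTopologicalAddGroup F]
    [ContinuousConstSMul 𝕜 F] [BaireSpace F] [T2Space F]
    (π : V →L[𝕜] F) (hπ : Surjective π) {U : Set V} (hU : U ∈ 𝓝 0) : π '' U ∈ 𝓝 0 :=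
  (π : V →+ F).image_mem_nhds_zero_of_closure_image π.continuous
    (fun _ hW => (π : V →ₗ[𝕜] F).closure_image_mem_nhds_zero hπ hW) hU

namespace Seminorm

variable {𝕜 V F : Type*} [NormedField 𝕜] [AddCommGroup V] [Module 𝕜 V] [AddCommGroup F]
  [Module 𝕜 F] (p : Seminorm 𝕜 V) {π : V →ₗ[𝕜] F} (hπ : Surjective π)

theorem bddBelow_range_fiber (f : F) : BddBelow (range fun v : {v // π v = f} => p v.1) :=
  ⟨0, by rintro _ ⟨v, rfl⟩; exact apply_nonneg p v.1⟩

/-- The quotient seminorm on `F ≃ V ⧸ ker π`. -/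
noncomputable def pushforward : Seminorm 𝕜 F :=
  haveI (f : F) : Nonempty {v // π v = f} := nonempty_subtype.2 (hπ f)
  Seminorm.ofSMulLE (fun f => ⨅ v : {v // π v = f}, p v.1)
    (le_antisymm ((ciInf_le (p.bddBelow_range_fiber 0) ⟨0, map_zero π⟩).trans_eq (map_zero p))
      (Real.iInf_nonneg fun v => apply_nonneg p v.1))
    (fun _ _ => le_ciInf_add_ciInf fun v w =>
      (ciInf_le (p.bddBelow_range_fiber _) ⟨v + w, by rw [map_add, v.2, w.2]⟩).trans
        (map_add_le_add p _ _))
    (fun c f => by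
      rw [Real.mul_iInf_of_nonneg (norm_nonneg c)]
      refine le_ciInf fun v => ?_
      rw [← map_smul_eq_mul]
      exact ciInf_le (p.bddBelow_range_fiber _) ⟨c • v, by rw [map_smul, v.2]⟩)

theorem pushforward_le {f : F} {v : V} (hv : π v = f) : p.pushforward hπ f ≤ p v :=
  ciInf_le (p.bddBelow_range_fiber f) ⟨v, hv⟩

theorem exists_lt_of_pushforward_lt {f : F} {r : ℝ} (h : p.pushforward hπ f < r) :
    ∃ v, π v = f ∧ p v < r := by
  have : Nonempty {v // π v = f} := nonempty_subtype.2 (hπ f)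
  obtain ⟨v, hv⟩ := exists_lt_of_ciInf_lt h
  exact ⟨v, v.2, hv⟩

theorem continuous_pushforward [TopologicalSpace V] [TopologicalSpace F] [IsTopologicalAddGroup F]
    (hp : Continuous p) (hπo : ∀ U ∈ 𝓝 (0 : V), π '' U ∈ 𝓝 0) :
    Continuous (p.pushforward hπ) :=
  Seminorm.continuous_of_forall fun _ hr => mem_of_superset (hπo _ (p.ball_mem_nhds hp hr))
    fun _ ⟨_, hv, hvf⟩ =>
      (mem_ball_zero _).2 ((p.pushforward_le hπ hvf).trans_lt ((mem_ball_zero p).1 hv))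

end Seminorm

theorem exists_continuous_seminorm_solution_lt {𝕜 E F H : Type*} [NontriviallyNormedField 𝕜]
    [AddCommGroup E] [Module 𝕜 E] [UniformSpace E] [IsUniformAddGroup E] [ContinuousSMul 𝕜 E]
    [CompleteSpace E] [FirstCountableTopology E]
    [AddCommGroup F] [Module 𝕜 F] [UniformSpace F] [IsUniformAddGroup F] [ContinuousSMul 𝕜 F]
    [CompleteSpace F] [FirstCountableTopology F] [T2Space F]
    [AddCommGroup H] [Module 𝕜 H] [TopologicalSpace H] [T2Space H]
    (A : E →L[𝕜] H) (B : F →L[𝕜] H) (hsolv : ∀ f, ∃ u, A u = B f)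
    (p : Seminorm 𝕜 E) (hp : Continuous p) :
    ∃ q : Seminorm 𝕜 F, Continuous q ∧ ∀ f r, q f < r → ∃ u, A u = B f ∧ p u < r := by
  let S := (A.comp (.fst 𝕜 E F)).toLinearMap.eqLocus (B.comp (.snd 𝕜 E F)).toLinearMap
  have : IsUniformAddGroup S := inferInstanceAs (IsUniformAddGroup S.toAddSubgroup)
  have : FirstCountableTopology S := inferInstanceAs (FirstCountableTopology (S : Set (E × F)))
  have : (𝓤 F).IsCountablyGenerated := IsUniformAddGroup.uniformity_countably_generated
  let π : S →L[𝕜] F := (ContinuousLinearMap.snd 𝕜 E F).comp S.subtypeL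
  have hπ : Surjective π := fun f =>
    let ⟨u, hu⟩ := hsolv f
    ⟨⟨(u, f), hu⟩, rfl⟩
  let pS := p.comp ((LinearMap.fst 𝕜 E F).comp S.subtype)
  have hpS : Continuous pS := hp.comp (continuous_fst.comp continuous_subtype_val)
  refine ⟨pS.pushforward (π := π.toLinearMap) hπ,
    pS.continuous_pushforward hπ hpS fun U hU => π.image_mem_nhds_zero_of_surjective hπ hU,
    fun f r h => ?_⟩
  obtain ⟨v, hv, hvr⟩ := pS.exists_lt_of_pushforward_lt hπ h
  exact ⟨v.1.1, hv ▸ v.2, hvr⟩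

theorem open_mapping_seminorm_solvability_general
    {E F G H : Type*}
    [AddCommGroup E] [Module ℂ E] [UniformSpace E] [IsUniformAddGroup E]
    [ContinuousSMul ℂ E] [CompleteSpace E] [TopologicalSpace.MetrizableSpace E]
    [AddCommGroup F] [Module ℂ F] [UniformSpace F] [IsUniformAddGroup F]
    [ContinuousSMul ℂ F] [CompleteSpace F] [TopologicalSpace.MetrizableSpace F]
    [AddCommGroup G] [Module ℂ G] [TopologicalSpace G]
    [AddCommGroup H] [Module ℂ H] [TopologicalSpace H]
    [T2Space H]
    (iE : E →L[ℂ] G) (iF : F →L[ℂ] H)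
    (T : G →L[ℂ] H)
    (hsolv : ∀ f : F, ∃ u : E, T (iE u) = iF f)
    (p : Seminorm ℂ E) (hp : Continuous p) :
    ∃ q : Seminorm ℂ F, Continuous q ∧
      (∀ f : F, 0 < q f → ∃ u : E, T (iE u) = iF f ∧ p u ≤ q f) ∧
      (∀ f : F, q f = 0 → ∀ ε : ℝ, 0 < ε → ∃ u : E, T (iE u) = iF f ∧ p u ≤ ε) := by
  obtain ⟨q, hq, hsol⟩ := exists_continuous_seminorm_solution_lt (T.comp iE) iF hsolv p hp
  refine ⟨q + q, by simpa only [FunLike.coe_add] using hq.add hq, fun f hf => ?_,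
    fun f hf ε hε => ?_⟩
  · obtain ⟨u, hu, hpu⟩ := hsol f ((q + q) f) (by rw [add_apply] at hf ⊢; linarith)
    exact ⟨u, hu, hpu.le⟩
  · rw [add_apply] at hf
    obtain ⟨u, hu, hpu⟩ := hsol f ε (by linarith [apply_nonneg q f])
    exact ⟨u, hu, hpu.le⟩

/-- Open-mapping-theorem principle: if `E, F` are Fréchet spaces (complete metrizable
locally convex TVS over `ℂ`), `G, H` Hausdorff TVS over `ℂ`, `i_E : E → G`, `i_F : F → H`
injective continuous linear maps, `T : G → H` continuous linear, and the equation
`T (i_E u) = i_F f` is solvable for every `f ∈ F`, then for every continuous seminorm `p`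
on `E` there is a continuous seminorm `q` on `F` such that the equation has a solution
with `p u ≤ q f` whenever `q f > 0`, and with `p u ≤ ε` for every `ε > 0` when `q f = 0`. -/
theorem open_mapping_seminorm_solvability
    {E F G H : Type*}
    [AddCommGroup E] [Module ℂ E] [UniformSpace E] [IsUniformAddGroup E]
    [ContinuousSMul ℂ E] [CompleteSpace E] [TopologicalSpace.MetrizableSpace E]
    [Module ℝ E] [IsScalarTower ℝ ℂ E] [LocallyConvexSpace ℝ E]
    [AddCommGroup F] [Module ℂ F] [UniformSpace F] [IsUniformAddGroup F]
    [ContinuousSMul ℂ F] [CompleteSpace F] [TopologicalSpace.MetrizableSpace F]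
    [Module ℝ F] [IsScalarTower ℝ ℂ F] [LocallyConvexSpace ℝ F]
    [AddCommGroup G] [Module ℂ G] [TopologicalSpace G] [IsTopologicalAddGroup G]
    [ContinuousSMul ℂ G] [T2Space G]
    [AddCommGroup H] [Module ℂ H] [TopologicalSpace H] [IsTopologicalAddGroup H]
    [ContinuousSMul ℂ H] [T2Space H]
    (iE : E →L[ℂ] G) (iF : F →L[ℂ] H)
    (hiE : Function.Injective iE) (hiF : Function.Injective iF)
    (T : G →L[ℂ] H)
    (hsolv : ∀ f : F, ∃ u : E, T (iE u) = iF f)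
    (p : Seminorm ℂ E) (hp : Continuous p) :
    ∃ q : Seminorm ℂ F, Continuous q ∧
      (∀ f : F, 0 < q f → ∃ u : E, T (iE u) = iF f ∧ p u ≤ q f) ∧
      (∀ f : F, q f = 0 → ∀ ε : ℝ, 0 < ε → ∃ u : E, T (iE u) = iF f ∧ p u ≤ ε) :=
  open_mapping_seminorm_solvability_general iE iF T hsolv p hp
end

section
/- Let U be a topological space, Y a metric space, φ : U → Y a continuous injective map, A a closed subset of U, and K, L, M compact subsets of U such that K is contained in the interior of L and in the interior of M, and such that L ∩ A and M ∩ A are both nonempty. Define d₁(x) = dist(φ(x), φ(L ∩ A)) and d₂(x) = dist(φ(x), φ(M ∩ A)) for x ∈ U. Then d₁ ∼_K d₂, i.e. there exists a constant C ≥ 1 such that d₁(x) ≤ C·d₂(x) and d₂(x) ≤ C·d₁(x) for all x ∈ K. -/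
/-!
Let `S = (M ∩ A) \ interior L`, a compact set whose image under `φ` is, by injectivity,
at a positive distance `δ` from the compact set `φ '' K`. For `x ∈ K` pick a point `φ p`
of `φ '' (M ∩ A)` nearest to `φ x`. If `p ∈ interior L` then `p ∈ L ∩ A` and
`d₁ x ≤ dist (φ x) (φ p) = d₂ x`; otherwise `p ∈ S`, so `d₂ x ≥ δ`, while `d₁` is bounded
on `K` by some `D`, giving `d₁ x ≤ (D / δ) d₂ x`. By symmetry the same holds with `L`
and `M` exchanged.
-/

open Metric Set

theorem Metric.infDist_le_max_mul_infDist_of_subset_union {Y : Type*} [PseudoMetricSpace Y]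
    {x : Y} {P Q S : Set Y} {δ D : ℝ} (hQ : IsCompact Q) (hQne : Q.Nonempty)
    (hQPS : Q ⊆ P ∪ S) (hδ : 0 < δ) (hxS : ∀ s ∈ S, δ ≤ dist x s) (hxP : infDist x P ≤ D) :
    infDist x P ≤ max 1 (D / δ) * infDist x Q := by
  obtain ⟨q, hqQ, hq⟩ := hQ.exists_infDist_eq_dist hQne x
  rcases hQPS hqQ with hqP | hqS
  · calc infDist x P ≤ dist x q := infDist_le_dist_of_mem hqP
      _ = 1 * infDist x Q := by rw [hq, one_mul]
      _ ≤ max 1 (D / δ) * infDist x Q := by gcongr; exacts [infDist_nonneg, le_max_left _ _]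
  · have hδQ : δ ≤ infDist x Q := hq ▸ hxS q hqS
    calc infDist x P ≤ D / δ * δ := by rwa [div_mul_cancel₀ D hδ.ne']
      _ ≤ max 1 (D / δ) * infDist x Q :=
        mul_le_mul (le_max_right _ _) hδQ hδ.le (zero_le_one.trans (le_max_left _ _))

theorem exists_forall_infDist_image_le_mul_infDist_image {U Y : Type*} [TopologicalSpace U]
    [MetricSpace Y] {φ : U → Y} (hφc : Continuous φ) (hφi : Function.Injective φ)
    {K W P B : Set U} (hK : IsCompact K) (hB : IsCompact B) (hBne : B.Nonempty)
    (hW : IsOpen W) (hKW : K ⊆ W) (hBWP : B ∩ W ⊆ P) :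
    ∃ C : ℝ, 1 ≤ C ∧ ∀ x ∈ K, infDist (φ x) (φ '' P) ≤ C * infDist (φ x) (φ '' B) := by
  have hsep : Disjoint (φ '' K) (φ '' (B \ W)) :=
    (disjoint_image_iff hφi).2 (disjoint_sdiff_right.mono_left hKW)
  obtain ⟨δ, hδ, hδsep⟩ := exists_pos_forall_lt_edist (hK.image hφc)
    ((hB.diff hW).image hφc).isClosed hsep
  obtain ⟨D, hD⟩ := hK.bddAbove_image ((continuous_infDist_pt (φ '' P)).comp hφc).continuousOn
  have hBPS : φ '' B ⊆ φ '' P ∪ φ '' (B \ W) := by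
    rw [← image_union]
    refine image_mono fun b hb => ?_
    by_cases hbW : b ∈ W
    exacts [Or.inl (hBWP ⟨hb, hbW⟩), Or.inr ⟨hb, hbW⟩]
  refine ⟨max 1 (D / δ), le_max_left _ _, fun x hx => ?_⟩
  refine infDist_le_max_mul_infDist_of_subset_union (hB.image hφc) (hBne.image φ) hBPS hδ
    (fun s hs => ?_) (hD (mem_image_of_mem _ hx))
  have hδs := hδsep _ (mem_image_of_mem φ hx) s hs
  rw [edist_nndist, ENNReal.coe_lt_coe] at hδs
  exact hδs.le

/-- Lemma 7.1: if `φ : U → Y` is continuous and injective, `A ⊆ U` is closed, and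
`K, L, M` are compact subsets of `U` with `K` contained in the interiors of `L` and of `M`,
and `L ∩ A`, `M ∩ A` are nonempty, then the functions
`d₁(x) = dist(φ(x), φ(L ∩ A))` and `d₂(x) = dist(φ(x), φ(M ∩ A))` are equivalent on `K`. -/
theorem dist_to_image_equiv_on_compact
    {U Y : Type*} [TopologicalSpace U] [MetricSpace Y]
    (φ : U → Y) (hφc : Continuous φ) (hφi : Function.Injective φ)
    (A : Set U) (hA : IsClosed A)
    (K L M : Set U) (hK : IsCompact K) (hL : IsCompact L) (hM : IsCompact M)
    (hKL : K ⊆ interior L) (hKM : K ⊆ interior M)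
    (hLA : (L ∩ A).Nonempty) (hMA : (M ∩ A).Nonempty) :
    ∃ C : ℝ, 1 ≤ C ∧ ∀ x ∈ K,
      Metric.infDist (φ x) (φ '' (L ∩ A)) ≤ C * Metric.infDist (φ x) (φ '' (M ∩ A)) ∧
      Metric.infDist (φ x) (φ '' (M ∩ A)) ≤ C * Metric.infDist (φ x) (φ '' (L ∩ A)) := by
  have near_interior {N N' : Set U} : (N' ∩ A) ∩ interior N ⊆ N ∩ A :=
    fun _ ⟨⟨_, hyA⟩, hyN⟩ => ⟨interior_subset hyN, hyA⟩
  obtain ⟨C₁, hC₁, h₁⟩ := exists_forall_infDist_image_le_mul_infDist_image hφc hφi hK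
    (hM.inter_right hA) hMA isOpen_interior hKL near_interior
  obtain ⟨C₂, -, h₂⟩ := exists_forall_infDist_image_le_mul_infDist_image hφc hφi hK
    (hL.inter_right hA) hLA isOpen_interior hKM near_interior
  refine ⟨max C₁ C₂, hC₁.trans (le_max_left _ _), fun x hx => ⟨?_, ?_⟩⟩
  · exact (h₁ x hx).trans (by gcongr; exacts [infDist_nonneg, le_max_left _ _])
  · exact (h₂ x hx).trans (by gcongr; exacts [infDist_nonneg, le_max_right _ _])
end
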